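/- arXiv:2311.11949 — 2 statements merged into one kernel-verified Lean document; each statement's English description precedes it below -/
import Mathlib

section
/- Let x2, y2 be positive integers of different parities. Then 4·x2^4·(x2^4 + y2^4) is not a perfect square. Consequently, the right triangle with legs y2^8 and 4·x2^4·(x2^4 + y2^4) and hypotenuse (2·x2^4 + y2^4)^2 cannot have all three side lengths equal to squares of integers simultaneously with the middle leg a square. -/
theorem stmt_11 (x2 y2 : ℤ) (hx : 0 < x2) (hy : 0 < y2)
    (hpar : (Even x2 ∧ Odd y2) ∨ (Odd x2 ∧ Even y2)) :
    ¬ IsSquare (4 * x2^4 * (x2^4 + y2^4)) := by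
  rintro ⟨r, hr⟩
  have hc : (2 * x2^2) ≠ 0 := by positivity
  have heq : (2 * x2^2)^2 * (x2^4 + y2^4) = r^2 := by ring_nf; ring_nf at hr; linarith
  have hdvd : (2 * x2^2) ∣ r := by
    have : (2 * x2^2)^2 ∣ r^2 := ⟨_, heq.symm⟩
    exact (Int.pow_dvd_pow_iff two_ne_zero).mp this
  obtain ⟨s, hs⟩ := hdvd
  have : x2^4 + y2^4 = s^2 := by
    have h2 : (2 * x2^2)^2 * (x2^4 + y2^4) = (2 * x2^2)^2 * s^2 := by rw [heq, hs]; ring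
    exact mul_left_cancel₀ (pow_ne_zero 2 hc) h2
  exact not_fermat_42 hx.ne' hy.ne' this
end

section
/- With cuboid notation as above, define 16·S1^2 = (c^2 + e^2 + f^2)^2 - 2·(c^4 + e^4 + f^4) (Heron expression for the triangle on the face diagonals) and 16·S2^2 = (a^2 + b^2 + d^2)^2 - 2·(a^4 + b^4 + d^4) (Heron expression for the triangle on the edges). Then g^4 = 16·S1^2 - 16·S2^2. -/
theorem stmt_18 (a b d c e f g : ℝ)
    (hc : c^2 = a^2 + b^2) (he : e^2 = a^2 + d^2)
    (hf : f^2 = b^2 + d^2) (hg : g^2 = a^2 + b^2 + d^2)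
    (S1sq16 S2sq16 : ℝ)
    (hS1 : S1sq16 = (c^2 + e^2 + f^2)^2 - 2 * (c^4 + e^4 + f^4))
    (hS2 : S2sq16 = (a^2 + b^2 + d^2)^2 - 2 * (a^4 + b^4 + d^4)) :
    g^4 = S1sq16 - S2sq16 := by
  have hc4 : c^4 = (a^2+b^2)^2 := by rw [show c^4 = (c^2)^2 by ring, hc]
  have he4 : e^4 = (a^2+d^2)^2 := by rw [show e^4 = (e^2)^2 by ring, he]
  have hf4 : f^4 = (b^2+d^2)^2 := by rw [show f^4 = (f^2)^2 by ring, hf]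
  have hg4 : g^4 = (a^2+b^2+d^2)^2 := by rw [show g^4 = (g^2)^2 by ring, hg]
  subst hS1 hS2
  rw [hg4, hc, he, hf, hc4, he4, hf4]; ring
end
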